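/- arXiv:1805.05273 — 8 statements merged into one kernel-verified Lean document; each statement's English description precedes it below -/
import Mathlib

section
/- For finite simple graphs G_1 and G_2 and any vertex (u,v) of the Cartesian product G_1 × G_2, one has δ_{G_1 × G_2}(u,v) = δ_{G_1}(u) + δ_{G_2}(v) + 2·deg_{G_1}(u)·deg_{G_2}(v). -/
open Finset
open scoped Classical

/-- Sum of degrees of the neighbours of a vertex: `δ_G(v) = ∑_{u ∈ N_G(v)} deg_G(u)`. -/
noncomputable def neighborDegSum {V : Type*} [Fintype V] (G : SimpleGraph V) (v : V) : ℕ :=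
  ∑ u ∈ G.neighborFinset v, G.degree u

namespace SimpleGraph

variable {α β : Type*} {G : SimpleGraph α} {H : SimpleGraph β} (a : α) (b : β)
  [Fintype (G.neighborSet a)] [Fintype (H.neighborSet b)] [Fintype ((G □ H).neighborSet (a, b))]

/- Mathlib states these at `x : α × β`; at a pair the instance arguments no longer mention
`(a, b).1`, `(a, b).2`, which otherwise keeps `sum_const` from firing on the summands. -/

theorem sum_neighborFinset_boxProd_mk {M : Type*} [AddCommMonoid M] (f : α × β → M) :
    ∑ p ∈ (G □ H).neighborFinset (a, b), f p =
      ∑ a' ∈ G.neighborFinset a, f (a', b) + ∑ b' ∈ H.neighborFinset b, f (a, b') := by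
  rw [neighborFinset_boxProd, sum_disjUnion, sum_product, sum_product]
  simp only [sum_singleton]

theorem degree_boxProd_mk : (G □ H).degree (a, b) = G.degree a + H.degree b :=
  degree_boxProd (a, b)

end SimpleGraph

theorem neighborDegSum_boxProd {V W : Type*} [Fintype V] [Fintype W]
    (G₁ : SimpleGraph V) (G₂ : SimpleGraph W) (u : V) (v : W) :
    neighborDegSum (G₁ □ G₂) (u, v) =
      neighborDegSum G₁ u + neighborDegSum G₂ v + 2 * G₁.degree u * G₂.degree v := by
  unfold neighborDegSum
  simp only [SimpleGraph.sum_neighborFinset_boxProd_mk, SimpleGraph.degree_boxProd_mk,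
    sum_add_distrib, sum_const, SimpleGraph.card_neighborFinset_eq_degree, smul_eq_mul]
  ring
end

section
/- For finite simple graphs G_1 and G_2, the Neighbourhood Zagreb index of their Cartesian product satisfies M_N(G_1 × G_2) = 6·M_1(G_1)·M_1(G_2) + |V_2|·M_N(G_1) + |V_1|·M_N(G_2) + 16·(|E_2|·M_2(G_1) + |E_1|·M_2(G_2)). -/
/-!
The neighbours of `(u, v)` in `G₁ □ G₂` are the `(u', v)` with `u' ~ u` and the `(u, v')` with
`v' ~ v`, and `deg (u, v) = deg u + deg v`; hence `δ (u, v) = δ u + δ v + 2 deg u deg v`.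
Squaring and summing over `V₁ × V₂` leaves products of sums over the two factors, which are
evaluated by counting darts:
`∑ δ = M₁` (every vertex `u` is counted once from each of its `deg u` neighbours),
`∑ deg · δ = 2 M₂` (every edge is seen from both ends) and the handshake `∑ deg = 2 |E|`.
-/

open Finset
open scoped Classical

/-- The first Zagreb index `M₁(G) = ∑_{v ∈ V(G)} deg_G(v)²`. -/
noncomputable def firstZagreb {V : Type*} [Fintype V] (G : SimpleGraph V) : ℕ :=
  ∑ v, (G.degree v) ^ 2

/-- The second Zagreb index `M₂(G) = ∑_{uv ∈ E(G)} deg_G(u)·deg_G(v)`,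
the sum running over the edges of `G`. -/
noncomputable def secondZagreb {V : Type*} [Fintype V] (G : SimpleGraph V) : ℕ :=
  ∑ e ∈ G.edgeFinset,
    Sym2.lift ⟨fun u w => G.degree u * G.degree w, fun _ _ => mul_comm _ _⟩ e

/-- The Neighbourhood Zagreb index `M_N(G) = ∑_{v ∈ V(G)} δ_G(v)²`. -/
noncomputable def neighborhoodZagreb {V : Type*} [Fintype V] (G : SimpleGraph V) : ℕ :=
  ∑ v, (neighborDegSum G v) ^ 2

namespace SimpleGraph

variable {V : Type*} [Fintype V] (G : SimpleGraph V)

section Sums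

variable {M : Type*} [AddCommMonoid M]

theorem sum_dart_eq_sum_sum_neighborFinset (f : V → V → M) :
    ∑ d : G.Dart, f d.fst d.snd = ∑ v, ∑ u ∈ G.neighborFinset v, f v u := by
  rw [← sum_fiberwise univ fun d : G.Dart => d.fst]
  refine sum_congr rfl fun v _ => ?_
  rw [G.dart_fst_fiber, sum_image fun _ _ _ _ h => G.dartOfNeighborSet_injective v h]
  exact (sum_subtype _ (fun u => mem_neighborFinset G v u) (f v)).symm

theorem sum_dart_edge_eq_two_smul_sum_edgeFinset (f : Sym2 V → M) :
    ∑ d : G.Dart, f d.edge = 2 • ∑ e ∈ G.edgeFinset, f e := by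
  rw [← sum_fiberwise_of_maps_to (g := Dart.edge) (t := G.edgeFinset)
    fun d _ => mem_edgeFinset.2 d.edge_mem, smul_sum]
  refine sum_congr rfl fun e he => ?_
  rw [sum_congr rfl fun d hd => congrArg f (mem_filter.1 hd).2, sum_const,
    G.dart_edge_fiber_card e (mem_edgeFinset.1 he)]

theorem sum_sum_neighborFinset_comm (f : V → V → M) :
    ∑ v, ∑ u ∈ G.neighborFinset v, f v u = ∑ v, ∑ u ∈ G.neighborFinset v, f u v :=
  sum_comm' (by simp [adj_comm])

end Sums

theorem sum_neighborDegSum : ∑ v, neighborDegSum G v = firstZagreb G := by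
  simp only [neighborDegSum, firstZagreb]
  rw [sum_sum_neighborFinset_comm G fun _ u => G.degree u]
  simp only [sum_const, smul_eq_mul, card_neighborFinset_eq_degree, sq]

theorem sum_degree_mul_neighborDegSum :
    ∑ v, G.degree v * neighborDegSum G v = 2 * secondZagreb G := by
  simp only [neighborDegSum, mul_sum]
  rw [← sum_dart_eq_sum_sum_neighborFinset G fun v u => G.degree v * G.degree u, secondZagreb,
    ← smul_eq_mul, ← sum_dart_edge_eq_two_smul_sum_edgeFinset]
  rfl

theorem neighborDegSum_boxProd {W : Type*} [Fintype W] (G₁ : SimpleGraph V) (G₂ : SimpleGraph W)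
    (u : V) (v : W) :
    neighborDegSum (G₁ □ G₂) (u, v) =
      neighborDegSum G₁ u + neighborDegSum G₂ v + 2 * (G₁.degree u * G₂.degree v) := by
  have hdeg (a : V) (b : W) [Fintype ((G₁ □ G₂).neighborSet (a, b))] :
      (G₁ □ G₂).degree (a, b) = G₁.degree a + G₂.degree b := by
    convert degree_boxProd (G := G₁) (H := G₂) (a, b)
  rw [neighborDegSum, neighborFinset_boxProd, sum_disjUnion, sum_product, sum_product]
  simp only [sum_singleton, hdeg, sum_add_distrib, sum_const, smul_eq_mul, card_singleton, one_mul,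
    neighborDegSum, card_neighborFinset_eq_degree]
  ring

end SimpleGraph

theorem Finset.sum_sum_sq_add_add_two_mul_mul {R ι κ : Type*} [CommSemiring R] [Fintype ι]
    [Fintype κ] (a c : ι → R) (b e : κ → R) :
    ∑ i, ∑ j, (a i + b j + 2 * (c i * e j)) ^ 2 =
      Fintype.card κ • ∑ i, a i ^ 2 + Fintype.card ι • ∑ j, b j ^ 2
        + 4 * ((∑ i, c i ^ 2) * ∑ j, e j ^ 2) + 2 * ((∑ i, a i) * ∑ j, b j)
        + 4 * ((∑ i, c i * a i) * ∑ j, e j) + 4 * ((∑ i, c i) * ∑ j, e j * b j) := by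
  have hexpand (i : ι) (j : κ) : (a i + b j + 2 * (c i * e j)) ^ 2 =
      a i ^ 2 + b j ^ 2 + 4 * (c i ^ 2 * e j ^ 2) + 2 * (a i * b j)
        + 4 * (c i * a i * e j) + 4 * (c i * (e j * b j)) := by ring
  simp only [hexpand, sum_add_distrib, ← mul_sum, ← sum_mul, sum_const, card_univ, ← smul_sum]

theorem neighborhoodZagreb_boxProd {V W : Type*} [Fintype V] [Fintype W]
    (G₁ : SimpleGraph V) (G₂ : SimpleGraph W) :
    neighborhoodZagreb (G₁ □ G₂) =
      6 * firstZagreb G₁ * firstZagreb G₂ +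
      Fintype.card W * neighborhoodZagreb G₁ + Fintype.card V * neighborhoodZagreb G₂ +
      16 * (G₂.edgeFinset.card * secondZagreb G₁ + G₁.edgeFinset.card * secondZagreb G₂) := by
  have hsplit : neighborhoodZagreb (G₁ □ G₂) = ∑ u, ∑ v,
      (neighborDegSum G₁ u + neighborDegSum G₂ v + 2 * (G₁.degree u * G₂.degree v)) ^ 2 := by
    simp only [neighborhoodZagreb, Fintype.sum_prod_type, SimpleGraph.neighborDegSum_boxProd]
  rw [hsplit, sum_sum_sq_add_add_two_mul_mul, ← neighborhoodZagreb, ← neighborhoodZagreb,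
    ← firstZagreb, ← firstZagreb, G₁.sum_neighborDegSum, G₂.sum_neighborDegSum,
    G₁.sum_degree_mul_neighborDegSum, G₂.sum_degree_mul_neighborDegSum,
    G₁.sum_degrees_eq_twice_card_edges, G₂.sum_degrees_eq_twice_card_edges, smul_eq_mul,
    smul_eq_mul]
  ring
end

section
/- For every integer n ≥ 3, the Neighbourhood Zagreb index of the ladder graph L_n = P_2 × P_{n+1} equals 162n − 130. -/
open Finset
open scoped Classical

/-- The ladder graph `L_n = P₂ × P_{n+1}`. -/
noncomputable def ladderGraph (n : ℕ) : SimpleGraph (Fin 2 × Fin (n + 1)) :=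
  SimpleGraph.pathGraph 2 □ SimpleGraph.pathGraph (n + 1)

/-! By the product rule `δ_{G □ H}(a, b) = δ_G(a) + 2 deg_G(a) deg_H(b) + δ_H(b)`, a vertex of
`L_n = P₂ □ P_{n+1}` in rung `k` has `δ = 1 + 2 deg_P(k) + δ_P(k)`: this is `5` on the two end
rungs, `8` on the two rungs next to them and `9` on the remaining `n - 3` rungs. Summing the
squares over both rails gives `M_N(L_n) = 2 (2·25 + 2·64 + (n - 3)·81) = 162 n - 130`. -/

open SimpleGraph

theorem neighborDegSum_boxProd_s5 {α β : Type*} [Fintype α] [Fintype β]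
    (G : SimpleGraph α) (H : SimpleGraph β) (x : α × β) :
    neighborDegSum (G □ H) x =
      neighborDegSum G x.1 + 2 * G.degree x.1 * H.degree x.2 + neighborDegSum H x.2 := by
  simp only [neighborDegSum, neighborFinset_boxProd, sum_disjUnion, sum_product, sum_singleton,
    degree_boxProd, sum_add_distrib]
  -- `sum_const` does not fire: the summands carry `Fintype` instances mentioning the bound variable
  rw [sum_const_nat (m := G.degree x.1) fun _ _ => rfl,
    sum_const_nat (m := H.degree x.2) fun _ _ => rfl,
    card_neighborFinset_eq_degree, card_neighborFinset_eq_degree]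
  ring

lemma map_val_neighborFinset_pathGraph {n : ℕ} (j : Fin n) :
    ((pathGraph n).neighborFinset j).map Fin.valEmbedding =
      (if (j : ℕ) = 0 then ∅ else {(j : ℕ) - 1}) ∪
        (if (j : ℕ) + 1 = n then ∅ else {(j : ℕ) + 1}) := by
  ext k
  simp only [mem_map, mem_neighborFinset, pathGraph_adj, Fin.valEmbedding_apply, mem_union]
  constructor
  · rintro ⟨u, hu, rfl⟩
    split_ifs <;> simp <;> omega
  · intro hk
    have hkn : k < n := by split_ifs at hk <;> simp at hk <;> omega
    refine ⟨⟨k, hkn⟩, ?_, rfl⟩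
    split_ifs at hk <;> simp at hk <;> simp <;> omega

lemma sum_neighborFinset_pathGraph {M : Type*} [AddCommMonoid M] {n : ℕ} (f : ℕ → M)
    (j : Fin n) :
    ∑ u ∈ (pathGraph n).neighborFinset j, f u =
      (if (j : ℕ) = 0 then 0 else f (j - 1)) + (if (j : ℕ) + 1 = n then 0 else f (j + 1)) := by
  change ∑ u ∈ _, f (Fin.valEmbedding u) = _
  rw [← sum_map _ Fin.valEmbedding f, map_val_neighborFinset_pathGraph, sum_union]
  · split_ifs <;> simp
  · split_ifs <;> simp

def pathDegree (n k : ℕ) : ℕ := (if k = 0 then 0 else 1) + (if k + 1 = n then 0 else 1)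

lemma degree_pathGraph {n : ℕ} (j : Fin n) : (pathGraph n).degree j = pathDegree n j := by
  rw [← card_neighborFinset_eq_degree, card_eq_sum_ones,
    sum_neighborFinset_pathGraph (fun _ ↦ 1), pathDegree]

lemma neighborDegSum_pathGraph {n : ℕ} (j : Fin n) :
    neighborDegSum (pathGraph n) j =
      (if (j : ℕ) = 0 then 0 else pathDegree n (j - 1)) +
        (if (j : ℕ) + 1 = n then 0 else pathDegree n (j + 1)) := by
  simp only [neighborDegSum, degree_pathGraph]
  exact sum_neighborFinset_pathGraph (pathDegree n) j

def ladderNeighborDegSum (n k : ℕ) : ℕ :=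
  if k = 0 ∨ k = n then 5 else if k = 1 ∨ k = n - 1 then 8 else 9

lemma neighborDegSum_ladderGraph {n : ℕ} (hn : 3 ≤ n) (v : Fin 2 × Fin (n + 1)) :
    neighborDegSum (ladderGraph n) v = ladderNeighborDegSum n v.2 := by
  have hP2 : ∀ i : Fin 2, neighborDegSum (pathGraph 2) i = 1 ∧ (pathGraph 2).degree i = 1 := by
    intro i
    fin_cases i <;> simp [neighborDegSum_pathGraph, degree_pathGraph, pathDegree]
  have hv := v.2.isLt
  rw [ladderGraph, neighborDegSum_boxProd_s5, (hP2 _).1, (hP2 _).2, degree_pathGraph,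
    neighborDegSum_pathGraph]
  grind [pathDegree, ladderNeighborDegSum]

lemma sum_range_ladderNeighborDegSum_sq {n : ℕ} (hn : 3 ≤ n) :
    ∑ k ∈ range (n + 1), ladderNeighborDegSum n k ^ 2 + 65 = 81 * n := by
  obtain ⟨m, rfl⟩ : ∃ m, n = m + 3 := ⟨n - 3, by omega⟩
  have h_inner : ∑ k ∈ range m, ladderNeighborDegSum (m + 3) (k + 2) ^ 2 = 81 * m := by
    rw [sum_congr rfl fun k hk ↦ by
      have hkm := mem_range.mp hk
      rw [ladderNeighborDegSum, if_neg (by omega), if_neg (by omega)]]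
    simp [mul_comm]
  rw [sum_range_succ, sum_range_succ, sum_range_succ', sum_range_succ', h_inner]
  simp [ladderNeighborDegSum]
  omega

theorem neighborhoodZagreb_ladderGraph (n : ℕ) (hn : 3 ≤ n) :
    (neighborhoodZagreb (ladderGraph n) : ℤ) = 162 * n - 130 := by
  have h_rungs : neighborhoodZagreb (ladderGraph n) =
      2 * ∑ k ∈ range (n + 1), ladderNeighborDegSum n k ^ 2 := by
    simp only [neighborhoodZagreb, Fintype.sum_prod_type, neighborDegSum_ladderGraph hn,
      Fin.sum_univ_eq_sum_range (fun k ↦ ladderNeighborDegSum n k ^ 2), sum_const, card_univ,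
      Fintype.card_fin, smul_eq_mul]
  have h_sum := sum_range_ladderNeighborDegSum_sq hn
  omega
end

section
/- For all integers m ≥ 3 and n ≥ 4, the Neighbourhood Zagreb index of the C_4-nanotube TUC_4(m,n) = P_n × C_m equals 256mn − 374m. -/
open Finset
open scoped Classical

/-!
The neighbours of `(a, b)` in `G □ H` are the `(a', b)` and the `(a, b')`, of degrees
`deg a' + deg b` and `deg a + deg b'`, so `δ(a, b) = δ a + δ b + 2 deg a deg b`.
In `C_m` every vertex has degree 2 and `δ = 4`, so a vertex `(i, v)` of the nanotube has
`δ = δ_P(i) + 4 + 4 deg_P(i)`: this is 10 at the two ends of the path, 15 next to them and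
16 elsewhere. Hence `M_N = m (2·10² + 2·15² + (n - 4)·16²) = 256mn - 374m`.
-/

namespace SimpleGraph

variable {V W : Type*} [Fintype V] [Fintype W]

-- `neighborDegSum` is built from the classical `Fintype` instances; this restates it for any.
lemma neighborDegSum_eq_sum_degree (G : SimpleGraph V) [G.LocallyFinite] (v : V) :
    neighborDegSum G v = ∑ u ∈ G.neighborFinset v, G.degree u := by
  unfold neighborDegSum
  congr!

lemma neighborDegSum_boxProd_s7 (G : SimpleGraph V) (H : SimpleGraph W) [G.LocallyFinite]
    [H.LocallyFinite] (a : V) (b : W) :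
    neighborDegSum (G □ H) (a, b) =
      neighborDegSum G a + neighborDegSum H b + 2 * G.degree a * H.degree b := by
  have hdeg (a : V) (b : W) : (G □ H).degree (a, b) = G.degree a + H.degree b :=
    degree_boxProd (a, b)
  rw [neighborDegSum_eq_sum_degree, neighborFinset_boxProd, sum_disjUnion, sum_product,
    sum_product]
  simp only [sum_singleton, hdeg, sum_add_distrib, sum_const, smul_eq_mul, card_singleton,
    one_mul, card_neighborFinset_eq_degree, neighborDegSum_eq_sum_degree]
  ring

lemma neighborDegSum_of_isRegularOfDegree {H : SimpleGraph W} [H.LocallyFinite] {k : ℕ}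
    (hH : H.IsRegularOfDegree k) (w : W) : neighborDegSum H w = k ^ 2 := by
  simp only [neighborDegSum_eq_sum_degree, hH.degree_eq, sum_const,
    card_neighborFinset_eq_degree, smul_eq_mul]
  ring

lemma neighborhoodZagreb_boxProd_of_isRegularOfDegree (G : SimpleGraph V) [G.LocallyFinite]
    {H : SimpleGraph W} [H.LocallyFinite] {k : ℕ} (hH : H.IsRegularOfDegree k) :
    neighborhoodZagreb (G □ H) =
      Fintype.card W * ∑ v, (neighborDegSum G v + k ^ 2 + 2 * k * G.degree v) ^ 2 := by
  simp only [neighborhoodZagreb, Fintype.sum_prod_type, neighborDegSum_boxProd_s7,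
    neighborDegSum_of_isRegularOfDegree hH, hH.degree_eq, sum_const, card_univ, smul_eq_mul]
  rw [mul_sum]
  exact sum_congr rfl fun v _ => by ring

lemma cycleGraph_isRegularOfDegree_two {m : ℕ} (hm : 3 ≤ m) [(cycleGraph m).LocallyFinite] :
    (cycleGraph m).IsRegularOfDegree 2 := by
  obtain ⟨k, rfl⟩ : ∃ k, m = k + 3 := ⟨m - 3, by omega⟩
  intro v
  convert cycleGraph_degree_three_le

lemma sum_neighborFinset_pathGraph {n : ℕ} (f : ℕ → ℕ) (i : Fin n)
    [Fintype ((pathGraph n).neighborSet i)] :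
    ∑ j ∈ (pathGraph n).neighborFinset i, f j =
      (if 0 < i.val then f (i.val - 1) else 0) + (if i.val + 1 < n then f (i.val + 1) else 0) := by
  have hnbrs : (pathGraph n).neighborFinset i =
      univ.filter (fun j : Fin n => j.val + 1 = i.val) ∪
        univ.filter (fun j : Fin n => i.val + 1 = j.val) := by
    ext j
    simp [pathGraph_adj, or_comm]
  rw [hnbrs, sum_union (disjoint_filter.2 fun _ _ _ => by omega), sum_filter, sum_filter,
    Fin.sum_univ_eq_sum_range (fun k => if k + 1 = i.val then f k else 0),
    Fin.sum_univ_eq_sum_range (fun k => if i.val + 1 = k then f k else 0), sum_ite_eq,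
    sum_eq_single (i.val - 1) (fun k _ hk => if_neg (by omega))
      (fun h => absurd (mem_range.2 (by omega)) h)]
  simp only [mem_range]
  split_ifs <;> omega

lemma pathGraph_degree {n : ℕ} (hn : 2 ≤ n) (i : Fin n)
    [Fintype ((pathGraph n).neighborSet i)] :
    (pathGraph n).degree i = if i.val = 0 ∨ i.val + 1 = n then 1 else 2 := by
  rw [← card_neighborFinset_eq_degree, card_eq_sum_ones,
    sum_neighborFinset_pathGraph (fun _ => 1)]
  have := i.isLt
  split_ifs <;> omega

lemma neighborDegSum_pathGraph {n : ℕ} (hn : 4 ≤ n) (i : Fin n) :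
    neighborDegSum (pathGraph n) i =
      if i.val = 0 ∨ i.val + 1 = n then 2 else if i.val = 1 ∨ i.val + 2 = n then 3 else 4 := by
  rw [neighborDegSum, sum_congr rfl fun j _ => pathGraph_degree (by omega) j,
    sum_neighborFinset_pathGraph (fun k => if k = 0 ∨ k + 1 = n then 1 else 2)]
  have := i.isLt
  grind

end SimpleGraph

lemma Fin.sum_ite_near_ends {n : ℕ} (hn : 4 ≤ n) (a b c : ℤ) :
    ∑ i : Fin n, (if i.val = 0 ∨ i.val + 1 = n then a
      else if i.val = 1 ∨ i.val + 2 = n then b else c) = 2 * a + 2 * b + (n - 4) * c := by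
  rw [Fin.sum_univ_eq_sum_range
    (fun k => if k = 0 ∨ k + 1 = n then a else if k = 1 ∨ k + 2 = n then b else c)]
  have hindicator (k : ℕ) (hk : k ∈ range n) :
      (if k = 0 ∨ k + 1 = n then a else if k = 1 ∨ k + 2 = n then b else c) =
        (if k = 0 then a - c else 0) + (if n - 1 = k then a - c else 0) +
          (if k = 1 then b - c else 0) + (if n - 2 = k then b - c else 0) + c := by
    rw [mem_range] at hk
    split_ifs <;> omega
  rw [sum_congr rfl hindicator]
  simp only [sum_add_distrib, sum_ite_eq, sum_ite_eq', mem_range, Finset.sum_const, card_range,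
    nsmul_eq_mul]
  rw [if_pos (by omega), if_pos (by omega), if_pos (by omega), if_pos (by omega)]
  ring

theorem neighborhoodZagreb_nanotube (m n : ℕ) (hm : 3 ≤ m) (hn : 4 ≤ n) :
    (neighborhoodZagreb (SimpleGraph.pathGraph n □ SimpleGraph.cycleGraph m) : ℤ) =
      256 * m * n - 374 * m := by
  have hvertex (i : Fin n) :
      (neighborDegSum (SimpleGraph.pathGraph n) i + 2 ^ 2
          + 2 * 2 * (SimpleGraph.pathGraph n).degree i) ^ 2 =
        if i.val = 0 ∨ i.val + 1 = n then 100
        else if i.val = 1 ∨ i.val + 2 = n then 225 else 256 := by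
    rw [SimpleGraph.neighborDegSum_pathGraph hn, SimpleGraph.pathGraph_degree (by omega)]
    split_ifs <;> rfl
  rw [SimpleGraph.neighborhoodZagreb_boxProd_of_isRegularOfDegree _
      (SimpleGraph.cycleGraph_isRegularOfDegree_two hm), Fintype.card_fin]
  simp only [hvertex]
  push_cast
  rw [Fin.sum_ite_near_ends hn]
  ring
end

section
/- For all positive integers m and n, the Neighbourhood Zagreb index of the Rook's graph K_m × K_n equals mn·[6(m−1)^2(n−1)^2 + (n−1)^4 + (m−1)^4 + 4(m−1)(n−1)((m−1)^2 + (n−1)^2)]. -/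
open Finset
open scoped Classical

/-! The Rook's graph is `(m - 1) + (n - 1)`-regular, and in a `d`-regular graph every `δ(v)` equals
`d²`, so `M_N = m n ((m - 1) + (n - 1))⁴`; expanding the fourth power gives the stated formula. -/

namespace SimpleGraph

theorem IsRegularOfDegree.boxProd {α β : Type*} {G : SimpleGraph α} {H : SimpleGraph β}
    [G.LocallyFinite] [H.LocallyFinite] [(G □ H).LocallyFinite] {d e : ℕ}
    (hG : G.IsRegularOfDegree d) (hH : H.IsRegularOfDegree e) :
    (G □ H).IsRegularOfDegree (d + e) := fun x => by
  rw [degree_boxProd, hG x.1, hH x.2]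

variable {V : Type*} [Fintype V] {G : SimpleGraph V} [G.LocallyFinite] {d : ℕ}

-- `convert` bridges the given `LocallyFinite` instance and the one used in `neighborDegSum`.
theorem IsRegularOfDegree.neighborDegSum_eq (h : G.IsRegularOfDegree d) (v : V) :
    neighborDegSum G v = d * d := by
  rw [neighborDegSum, sum_const_nat fun u _ => by convert h u, card_neighborFinset_eq_degree]
  congr 1
  convert h v

theorem IsRegularOfDegree.neighborhoodZagreb_eq (h : G.IsRegularOfDegree d) :
    neighborhoodZagreb G = Fintype.card V * d ^ 4 := by
  simp_rw [neighborhoodZagreb, h.neighborDegSum_eq, sum_const, card_univ, smul_eq_mul]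
  ring

end SimpleGraph

open SimpleGraph in
theorem neighborhoodZagreb_rook_nat (m n : ℕ) :
    neighborhoodZagreb (completeGraph (Fin m) □ completeGraph (Fin n)) =
      m * n * ((m - 1) + (n - 1)) ^ 4 := by
  have hreg := (IsRegularOfDegree.top (V := Fin m)).boxProd (IsRegularOfDegree.top (V := Fin n))
  rw [hreg.neighborhoodZagreb_eq, Fintype.card_prod, Fintype.card_fin, Fintype.card_fin]

theorem neighborhoodZagreb_rook_general (m n : ℕ) :
    (neighborhoodZagreb (SimpleGraph.completeGraph (Fin m) □ SimpleGraph.completeGraph (Fin n)) : ℤ) =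
      m * n * (6 * (m - 1) ^ 2 * (n - 1) ^ 2 + (n - 1) ^ 4 + (m - 1) ^ 4 +
        4 * (m - 1) * (n - 1) * ((m - 1) ^ 2 + (n - 1) ^ 2)) := by
  rw [neighborhoodZagreb_rook_nat]
  rcases m with _ | m
  · simp
  rcases n with _ | n
  · simp
  push_cast [Nat.add_sub_cancel]
  ring

theorem neighborhoodZagreb_rook (m n : ℕ) (hm : 1 ≤ m) (hn : 1 ≤ n) :
    (neighborhoodZagreb (SimpleGraph.completeGraph (Fin m) □ SimpleGraph.completeGraph (Fin n)) : ℤ) =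
      m * n * (6 * (m - 1) ^ 2 * (n - 1) ^ 2 + (n - 1) ^ 4 + (m - 1) ^ 4 +
        4 * (m - 1) * (n - 1) * ((m - 1) ^ 2 + (n - 1) ^ 2)) :=
  neighborhoodZagreb_rook_general m n
end

section
/- Let G_1, …, G_n be finite simple graphs and let G = G_1 × ⋯ × G_n be their n-fold Cartesian product, with vertex set V and edge set E. Then M_2(G) = |V|·∑_{i=1}^n M_2(G_i)/|V_i| + 3·∑_{i=1}^n M_1(G_i)·(|E|/|V_i| − |V|·|E_i|/|V_i|^2) + 4|V|·∑_{(i,j,k): i,j,k pairwise distinct} (|E_i|·|E_j|·|E_k|)/(|V_i|·|V_j|·|V_k|), where the last sum runs over all ordered triples of pairwise distinct indices. -/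
open Finset
open scoped Classical

/-- The `n`-fold Cartesian (box) product `G₁ × ⋯ × Gₙ`: vertices are tuples, and two
tuples are adjacent iff they are adjacent in exactly one coordinate and equal elsewhere. -/
def boxProdPi {n : ℕ} {V : Fin n → Type*} (G : ∀ i, SimpleGraph (V i)) :
    SimpleGraph (∀ i, V i) where
  Adj a b := ∃ i, (G i).Adj (a i) (b i) ∧ ∀ j, j ≠ i → a j = b j
  symm := by
    refine ⟨?_⟩
    rintro a b ⟨i, hi, hj⟩
    exact ⟨i, (G i).symm.symm _ _ hi, fun j hji => (hj j hji).symm⟩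
  loopless := by
    refine ⟨?_⟩
    rintro a ⟨i, hi, -⟩
    exact (G i).loopless.irrefl _ hi

open scoped BigOperators

/-! An edge of the product in direction `i` joins `a` to `Function.update a i u` with `a i ~ u`
in `G i`; its endpoints have degrees `d_i(a i) + s` and `d_i(u) + s`, where
`s = ∑_{j ≠ i} d_j(a j)` does not involve the `i`-th coordinate. Expanding the product of the two
degrees and summing over the other coordinates, which vary independently, expresses everything
through averages over the factors: `𝔼 d_j = 2|E_j|/|V_j|`, `𝔼 d_j² = M₁(G_j)/|V_j|`, and the
averaged edge sums of `G_i`. The coefficient `3` collects `2` from the terms linear in `s` and `1`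
from the diagonal part of `s²`. -/

section PiSum
variable {ι : Type*} [Fintype ι] [DecidableEq ι] {V : ι → Type*} [∀ i, Fintype (V i)]
  {K : Type*} [Field K] [CharZero K]

/-- The factor `Fintype.card` (rather than an expectation on the left) keeps this true when some
`V i` is empty. -/
theorem sum_pi_prod_apply (s : Finset ι) (F : ∀ i, V i → K) :
    ∑ a : ∀ i, V i, ∏ i ∈ s, F i (a i) =
      Fintype.card (∀ i, V i) * ∏ i ∈ s, 𝔼 x, F i x := by
  calc ∑ a : ∀ i, V i, ∏ i ∈ s, F i (a i)
      = ∑ a : ∀ i, V i, ∏ i, if i ∈ s then F i (a i) else 1 := by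
        simp only [Finset.prod_ite_mem, Finset.univ_inter]
    _ = ∏ i, ∑ x, if i ∈ s then F i x else 1 :=
        (Fintype.prod_sum fun i (x : V i) => if i ∈ s then F i x else 1).symm
    _ = ∏ i, if i ∈ s then Fintype.card (V i) * 𝔼 x, F i x else Fintype.card (V i) := by
        refine Finset.prod_congr rfl fun i _ => ?_
        split_ifs <;> simp
    _ = _ := by
        rw [Finset.prod_ite, Finset.filter_not, Finset.filter_mem_eq_of_subset s.subset_univ,
          ← Finset.compl_eq_univ_sdiff, Fintype.card_pi, Nat.cast_prod,
          ← Finset.prod_mul_prod_compl s, Finset.prod_mul_distrib]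
        ring

theorem sum_pi_apply_mul_prod (i : ι) (f : V i → K) (g : ∀ j, V j → K) {s : Finset ι}
    (hi : i ∉ s) :
    ∑ a : ∀ j, V j, f (a i) * ∏ j ∈ s, g j (a j) =
      Fintype.card (∀ j, V j) * ((𝔼 x, f x) * ∏ j ∈ s, 𝔼 x, g j x) := by
  have hg (j : ι) (hj : j ∈ s) : Function.update g i f j = g j :=
    Function.update_of_ne (ne_of_mem_of_not_mem hj hi) f g
  simpa +contextual [Finset.prod_insert hi, hg] using
    sum_pi_prod_apply (insert i s) (Function.update g i f)

theorem sum_pi_apply (i : ι) (f : V i → K) :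
    ∑ a : ∀ j, V j, f (a i) = Fintype.card (∀ j, V j) * 𝔼 x, f x := by
  simpa using sum_pi_apply_mul_prod i f (fun _ _ => 1) (Finset.notMem_empty i)

theorem sum_pi_apply_mul_sum_erase (i : ι) (f : V i → K) (g : ∀ j, V j → K) :
    ∑ a : ∀ j, V j, f (a i) * ∑ j ∈ univ.erase i, g j (a j) =
      Fintype.card (∀ j, V j) * ∑ j ∈ univ.erase i, (𝔼 x, f x) * 𝔼 x, g j x := by
  simp_rw [Finset.mul_sum]
  rw [Finset.sum_comm]
  refine Finset.sum_congr rfl fun j hj => ?_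
  simpa using sum_pi_apply_mul_prod i f g (s := {j}) (by simpa [eq_comm] using hj)

theorem sum_pi_apply_mul_sum_erase_sq (i : ι) (f : V i → K) (g : ∀ j, V j → K) :
    ∑ a : ∀ j, V j, f (a i) * (∑ j ∈ univ.erase i, g j (a j)) ^ 2 =
      Fintype.card (∀ j, V j) * ∑ j ∈ univ.erase i,
        ((𝔼 x, f x) * (𝔼 x, g j x ^ 2) +
          ∑ k ∈ (univ.erase i).erase j, (𝔼 x, f x) * ((𝔼 x, g j x) * 𝔼 x, g k x)) := by
  have hsq (a : ∀ j, V j) : (∑ j ∈ univ.erase i, g j (a j)) ^ 2 =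
      ∑ j ∈ univ.erase i,
        (g j (a j) ^ 2 + ∑ k ∈ (univ.erase i).erase j, g j (a j) * g k (a k)) := by
    rw [sq, Finset.sum_mul_sum]
    refine Finset.sum_congr rfl fun j hj => ?_
    rw [← Finset.add_sum_erase _ _ hj, sq]
  simp_rw [hsq, Finset.mul_sum, mul_add, Finset.mul_sum]
  rw [Finset.sum_comm]
  refine Finset.sum_congr rfl fun j hj => ?_
  rw [Finset.sum_add_distrib, Finset.sum_comm]
  congr 1
  · simpa using sum_pi_apply_mul_prod i f (fun j x => g j x ^ 2) (s := {j})
      (by simpa [eq_comm] using hj)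
  · refine Finset.sum_congr rfl fun k hk => ?_
    obtain ⟨hkj, hki⟩ : k ≠ j ∧ k ≠ i := by simpa using hk
    have hji : j ≠ i := by simpa using hj
    simpa [Finset.prod_pair hkj.symm, mul_assoc] using
      sum_pi_apply_mul_prod i f g (s := {j, k}) (by simp [hji.symm, hki.symm])

end PiSum

namespace SimpleGraph
variable {W : Type*} [Fintype W] (G : SimpleGraph W)

theorem sum_neighborFinset_eq_sum_darts {M : Type*} [AddCommMonoid M] (f : W → W → M) :
    ∑ v, ∑ w ∈ G.neighborFinset v, f v w = ∑ d : G.Dart, f d.fst d.snd := by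
  rw [← Finset.sum_fiberwise Finset.univ fun d : G.Dart => d.fst]
  refine Finset.sum_congr rfl fun v _ => ?_
  rw [G.dart_fst_fiber v, Finset.sum_image fun _ _ _ _ h => G.dartOfNeighborSet_injective v h]
  exact Finset.sum_subtype _ (fun w => by simp) (f v)

theorem sum_darts_edge {M : Type*} [AddCommMonoid M] (f : Sym2 W → M) :
    ∑ d : G.Dart, f d.edge = 2 • ∑ e ∈ G.edgeFinset, f e := by
  rw [← Finset.sum_fiberwise_of_maps_to (t := G.edgeFinset)
      fun d _ => G.mem_edgeFinset.2 d.edge_mem, Finset.smul_sum]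
  refine Finset.sum_congr rfl fun e he => ?_
  rw [Finset.sum_congr rfl fun d hd => by rw [(Finset.mem_filter.1 hd).2], Finset.sum_const,
    G.dart_edge_fiber_card e (G.mem_edgeFinset.1 he)]

theorem sum_neighborFinset_comm {M : Type*} [AddCommMonoid M] (f : W → W → M) :
    ∑ v, ∑ w ∈ G.neighborFinset v, f v w = ∑ v, ∑ w ∈ G.neighborFinset v, f w v := by
  simp only [sum_neighborFinset_eq_sum_darts]
  exact Fintype.sum_equiv (Dart.symm_involutive.toPerm _) _ _ fun _ => rfl

theorem sum_neighborFinset_degree_mul_degree :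
    ∑ v, ∑ w ∈ G.neighborFinset v, G.degree v * G.degree w = 2 * secondZagreb G := by
  rw [sum_neighborFinset_eq_sum_darts, secondZagreb, ← smul_eq_mul, ← sum_darts_edge]
  rfl

theorem sum_neighborFinset_degree_add_degree :
    ∑ v, ∑ w ∈ G.neighborFinset v, (G.degree v + G.degree w) = 2 * firstZagreb G := by
  simp only [Finset.sum_add_distrib]
  rw [sum_neighborFinset_comm G fun _ w => G.degree w]
  simp [firstZagreb, sq, two_mul]

variable {K : Type*} [Field K] [CharZero K]

theorem expect_degree : 𝔼 v, (G.degree v : K) = 2 * (#G.edgeFinset / Fintype.card W) := by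
  rw [Fintype.expect_eq_sum_div_card, ← mul_div_assoc]
  congr 1
  exact_mod_cast sum_degrees_eq_twice_card_edges G

theorem expect_degree_sq : 𝔼 v, (G.degree v : K) ^ 2 = firstZagreb G / Fintype.card W := by
  rw [Fintype.expect_eq_sum_div_card, firstZagreb]
  push_cast; rfl

theorem expect_sum_neighborFinset_degree_mul_degree :
    𝔼 v, ∑ w ∈ G.neighborFinset v, (G.degree v * G.degree w : K) =
      2 * (secondZagreb G / Fintype.card W) := by
  rw [Fintype.expect_eq_sum_div_card, ← mul_div_assoc]
  congr 1
  exact_mod_cast sum_neighborFinset_degree_mul_degree G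

theorem expect_sum_neighborFinset_degree_add_degree :
    𝔼 v, ∑ w ∈ G.neighborFinset v, (G.degree v + G.degree w : K) =
      2 * (firstZagreb G / Fintype.card W) := by
  rw [Fintype.expect_eq_sum_div_card, ← mul_div_assoc]
  congr 1
  exact_mod_cast sum_neighborFinset_degree_add_degree G

end SimpleGraph

section BoxProdPi
variable {n : ℕ} {V : Fin n → Type*} [∀ i, Fintype (V i)] (G : ∀ i, SimpleGraph (V i))

theorem sum_neighborFinset_boxProdPi {M : Type*} [AddCommMonoid M] (a : ∀ i, V i)
    (f : (∀ i, V i) → M) :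
    ∑ b ∈ (boxProdPi G).neighborFinset a, f b =
      ∑ i, ∑ u ∈ (G i).neighborFinset (a i), f (Function.update a i u) := by
  rw [Finset.sum_sigma']
  symm
  refine Finset.sum_bij (fun x _ => Function.update a x.1 x.2) ?_ ?_ ?_ fun _ _ => rfl
  · rintro ⟨i, u⟩ hu
    simp only [Finset.mem_sigma, Finset.mem_univ, true_and, SimpleGraph.mem_neighborFinset]
      at hu ⊢
    exact ⟨i, by simpa using hu, fun j hj => (Function.update_of_ne hj u a).symm⟩
  · rintro ⟨i, u⟩ hu ⟨j, w⟩ hw h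
    simp only [Finset.mem_sigma, Finset.mem_univ, true_and, SimpleGraph.mem_neighborFinset] at hu hw
    obtain rfl : i = j := by
      by_contra hij
      have := congrFun h i
      rw [Function.update_self, Function.update_of_ne hij] at this
      exact hu.ne this.symm
    simpa using congrFun h i
  · rintro b hb
    obtain ⟨i, hi, hj⟩ := (boxProdPi G).mem_neighborFinset a b |>.1 hb
    refine ⟨⟨i, b i⟩, by simpa using hi, funext fun j => ?_⟩
    by_cases hji : j = i
    · subst hji; simp
    · rw [Function.update_of_ne hji, hj j hji]

theorem degree_boxProdPi (a : ∀ i, V i) :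
    (boxProdPi G).degree a = ∑ i, (G i).degree (a i) := by
  simpa [← Finset.card_eq_sum_ones] using sum_neighborFinset_boxProdPi G a fun _ => (1 : ℕ)

theorem degree_boxProdPi_update (a : ∀ i, V i) (i : Fin n) (u : V i) :
    (boxProdPi G).degree (Function.update a i u) =
      (G i).degree u + ∑ j ∈ univ.erase i, (G j).degree (a j) := by
  rw [degree_boxProdPi, ← Finset.add_sum_erase _ _ (Finset.mem_univ i), Function.update_self]
  congr 1
  exact Finset.sum_congr rfl fun j hj => by rw [Function.update_of_ne (Finset.ne_of_mem_erase hj)]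

theorem two_mul_secondZagreb_boxProdPi :
    2 * secondZagreb (boxProdPi G) =
      ∑ i, ∑ a : ∀ j, V j, ∑ u ∈ (G i).neighborFinset (a i),
        (boxProdPi G).degree a * (boxProdPi G).degree (Function.update a i u) := by
  rw [← SimpleGraph.sum_neighborFinset_degree_mul_degree, Finset.sum_comm]
  exact Finset.sum_congr rfl fun a _ => sum_neighborFinset_boxProdPi G a _

theorem sum_pi_sum_neighborFinset_degree_mul_degree_update (i : Fin n) :
    ∑ a : ∀ j, V j, ∑ u ∈ (G i).neighborFinset (a i),
        ((boxProdPi G).degree a * (boxProdPi G).degree (Function.update a i u) : ℚ) =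
      Fintype.card (∀ j, V j) *
        (2 * (secondZagreb (G i) / Fintype.card (V i) : ℚ) +
          4 * ((firstZagreb (G i) / Fintype.card (V i) : ℚ) *
            ∑ j ∈ univ.erase i, (#(G j).edgeFinset / Fintype.card (V j) : ℚ)) +
          2 * ((#(G i).edgeFinset / Fintype.card (V i) : ℚ) *
            ∑ j ∈ univ.erase i, (firstZagreb (G j) / Fintype.card (V j) : ℚ)) +
          8 * ∑ j ∈ univ.erase i, ∑ k ∈ (univ.erase i).erase j,
            ((G i).edgeFinset.card * (G j).edgeFinset.card * (G k).edgeFinset.card : ℚ) /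
              ((Fintype.card (V i)) * (Fintype.card (V j)) * (Fintype.card (V k)))) := by
  have hexpand (a : ∀ j, V j) :
      ∑ u ∈ (G i).neighborFinset (a i),
          ((boxProdPi G).degree a * (boxProdPi G).degree (Function.update a i u) : ℚ) =
        ∑ u ∈ (G i).neighborFinset (a i), ((G i).degree (a i) * (G i).degree u : ℚ) +
          (∑ u ∈ (G i).neighborFinset (a i), ((G i).degree (a i) + (G i).degree u : ℚ)) *
            ∑ j ∈ univ.erase i, ((G j).degree (a j) : ℚ) +
          (G i).degree (a i) * (∑ j ∈ univ.erase i, ((G j).degree (a j) : ℚ)) ^ 2 := by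
    have hdeg := degree_boxProdPi_update G a i (a i)
    rw [Function.update_eq_self] at hdeg
    simp only [hdeg, degree_boxProdPi_update, Nat.cast_add, Nat.cast_sum]
    rw [← (G i).card_neighborFinset_eq_degree (a i), ← nsmul_eq_mul, ← Finset.sum_const,
      Finset.sum_mul, ← Finset.sum_add_distrib, ← Finset.sum_add_distrib]
    exact Finset.sum_congr rfl fun u _ => by ring
  have hP := sum_pi_apply i fun x => ∑ u ∈ (G i).neighborFinset x,
    ((G i).degree x * (G i).degree u : ℚ)
  have hQ := sum_pi_apply_mul_sum_erase i
    (fun x => ∑ u ∈ (G i).neighborFinset x, ((G i).degree x + (G i).degree u : ℚ))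
    fun j x => ((G j).degree x : ℚ)
  have hD := sum_pi_apply_mul_sum_erase_sq i (fun x => ((G i).degree x : ℚ))
    fun j x => ((G j).degree x : ℚ)
  simp only [SimpleGraph.expect_sum_neighborFinset_degree_mul_degree,
    SimpleGraph.expect_sum_neighborFinset_degree_add_degree, SimpleGraph.expect_degree,
    SimpleGraph.expect_degree_sq] at hP hQ hD
  simp only [hexpand]
  rw [Finset.sum_add_distrib, Finset.sum_add_distrib, hP, hQ, hD]
  have htriple (j k : Fin n) :
      2 * (#(G i).edgeFinset / Fintype.card (V i) : ℚ) *
          (2 * (#(G j).edgeFinset / Fintype.card (V j)) *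
            (2 * (#(G k).edgeFinset / Fintype.card (V k)))) =
        8 * (((G i).edgeFinset.card * (G j).edgeFinset.card * (G k).edgeFinset.card : ℚ) /
          ((Fintype.card (V i)) * (Fintype.card (V j)) * (Fintype.card (V k)))) := by
    ring
  simp only [htriple, ← Finset.mul_sum, Finset.sum_add_distrib]
  ring

theorem card_edgeFinset_boxProdPi :
    (#(boxProdPi G).edgeFinset : ℚ) =
      Fintype.card (∀ i, V i) * ∑ i, (#(G i).edgeFinset / Fintype.card (V i) : ℚ) := by
  have h : 2 * (#(boxProdPi G).edgeFinset : ℚ) =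
      ∑ i, ∑ a : ∀ j, V j, ((G i).degree (a i) : ℚ) := by
    rw [Finset.sum_comm]
    exact_mod_cast ((boxProdPi G).sum_degrees_eq_twice_card_edges.symm.trans
      (Finset.sum_congr rfl fun a _ => degree_boxProdPi G a))
  simp only [fun i => sum_pi_apply i fun x => ((G i).degree x : ℚ),
    SimpleGraph.expect_degree] at h
  rw [← mul_right_inj' (two_ne_zero (α := ℚ)), h, Finset.mul_sum, Finset.mul_sum]
  exact Finset.sum_congr rfl fun i _ => by ring

end BoxProdPi

theorem secondZagreb_boxProdPi {n : ℕ} {V : Fin n → Type*} [∀ i, Fintype (V i)]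
    (G : ∀ i, SimpleGraph (V i)) :
    (secondZagreb (boxProdPi G) : ℚ) =
      (Fintype.card (∀ i, V i)) * ∑ i, (secondZagreb (G i) : ℚ) / (Fintype.card (V i)) +
      3 * ∑ i, (firstZagreb (G i) : ℚ) *
        (((boxProdPi G).edgeFinset.card : ℚ) / (Fintype.card (V i)) -
          (Fintype.card (∀ i, V i)) * ((G i).edgeFinset.card : ℚ) / (Fintype.card (V i)) ^ 2) +
      4 * (Fintype.card (∀ i, V i)) *
        ∑ i, ∑ j ∈ univ.erase i, ∑ k ∈ (univ.erase i).erase j,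
          ((G i).edgeFinset.card * (G j).edgeFinset.card * (G k).edgeFinset.card : ℚ) /
            ((Fintype.card (V i)) * (Fintype.card (V j)) * (Fintype.card (V k))) := by
  have hM2 := congrArg (Nat.cast (R := ℚ)) (two_mul_secondZagreb_boxProdPi G)
  simp only [Nat.cast_mul, Nat.cast_sum, Nat.cast_ofNat,
    sum_pi_sum_neighborFinset_degree_mul_degree_update] at hM2
  simp only [← Finset.mul_sum, Finset.sum_add_distrib] at hM2
  have hmiddle (i : Fin n) :
      (firstZagreb (G i) : ℚ) *
        (((boxProdPi G).edgeFinset.card : ℚ) / (Fintype.card (V i)) -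
          (Fintype.card (∀ i, V i)) * ((G i).edgeFinset.card : ℚ) / (Fintype.card (V i)) ^ 2) =
      Fintype.card (∀ i, V i) * ((firstZagreb (G i) / Fintype.card (V i) : ℚ) *
        ∑ j ∈ univ.erase i, (#(G j).edgeFinset / Fintype.card (V j) : ℚ)) := by
    rw [card_edgeFinset_boxProdPi, ← Finset.add_sum_erase _ _ (Finset.mem_univ i)]
    ring
  have hswap : ∑ i, (#(G i).edgeFinset / Fintype.card (V i) : ℚ) *
        ∑ j ∈ univ.erase i, (firstZagreb (G j) / Fintype.card (V j) : ℚ) =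
      ∑ i, (firstZagreb (G i) / Fintype.card (V i) : ℚ) *
        ∑ j ∈ univ.erase i, (#(G j).edgeFinset / Fintype.card (V j) : ℚ) := by
    simp only [Finset.mul_sum]
    rw [Finset.sum_comm' (t' := univ) (s' := fun j => univ.erase j)
      fun i j => by simp [ne_comm]]
    exact Finset.sum_congr rfl fun i _ => Finset.sum_congr rfl fun j _ => mul_comm _ _
  rw [Finset.sum_congr rfl fun i _ => hmiddle i, ← Finset.mul_sum]
  linear_combination hM2 / 2 + Fintype.card (∀ i, V i) * hswap
end

section
/- For finite simple graphs G_1 and G_2, the Neighbourhood Zagreb index of their tensor product satisfies M_N(G_1 ⊗ G_2) = M_N(G_1)·M_N(G_2). -/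
open Finset
open scoped Classical

/-- The tensor product `G₁ ⊗ G₂`: `(u₁,v₁)` adjacent to `(u₂,v₂)` iff
`u₁u₂ ∈ E₁` and `v₁v₂ ∈ E₂`. -/
def tensorProd {V W : Type*} (G₁ : SimpleGraph V) (G₂ : SimpleGraph W) :
    SimpleGraph (V × W) where
  Adj x y := G₁.Adj x.1 y.1 ∧ G₂.Adj x.2 y.2
  symm := ⟨fun _ _ h => ⟨h.1.symm, h.2.symm⟩⟩
  loopless := ⟨fun _ h => G₁.loopless.irrefl _ h.1⟩

/-!
Neighbourhoods in `G₁ ⊗ G₂` are products of neighbourhoods, so degrees and the neighbour-degree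
sums `δ` are multiplicative; summing `δ²` over `V × W` then factors into the two indices.
-/

section TensorProd

variable {V W : Type*} [Fintype V] [Fintype W] (G₁ : SimpleGraph V) (G₂ : SimpleGraph W)

lemma tensorProd_neighborFinset (x : V × W) :
    (tensorProd G₁ G₂).neighborFinset x = G₁.neighborFinset x.1 ×ˢ G₂.neighborFinset x.2 := by
  ext y
  simp only [SimpleGraph.mem_neighborFinset, mem_product]
  rfl

lemma tensorProd_degree (x : V × W) :
    (tensorProd G₁ G₂).degree x = G₁.degree x.1 * G₂.degree x.2 := by
  rw [← SimpleGraph.card_neighborFinset_eq_degree, tensorProd_neighborFinset, card_product,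
    SimpleGraph.card_neighborFinset_eq_degree, SimpleGraph.card_neighborFinset_eq_degree]

lemma tensorProd_neighborDegSum (x : V × W) :
    neighborDegSum (tensorProd G₁ G₂) x = neighborDegSum G₁ x.1 * neighborDegSum G₂ x.2 := by
  simp only [neighborDegSum, tensorProd_neighborFinset, sum_product, tensorProd_degree,
    sum_mul_sum]

end TensorProd

theorem neighborhoodZagreb_tensorProd {V W : Type*} [Fintype V] [Fintype W]
    (G₁ : SimpleGraph V) (G₂ : SimpleGraph W) :
    neighborhoodZagreb (tensorProd G₁ G₂) =
      neighborhoodZagreb G₁ * neighborhoodZagreb G₂ := by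
  simp only [neighborhoodZagreb, Fintype.sum_prod_type, tensorProd_neighborDegSum, mul_pow,
    Fintype.sum_mul_sum]
end

section
/- For finite simple graphs G_1 and G_2 and any vertex (u,v) of the wreath product (composition) G_1[G_2], one has δ_{G_1[G_2]}(u,v) = |V_2|^2·δ_{G_1}(u) + δ_{G_2}(v) + 2|E_2|·deg_{G_1}(u) + |V_2|·deg_{G_1}(u)·deg_{G_2}(v). -/
open Finset
open scoped Classical

/-- The wreath product (composition) `G₁[G₂]`: `(u₁,v₁)` adjacent to `(u₂,v₂)` iff
`u₁u₂ ∈ E₁`, or (`u₁ = u₂` and `v₁v₂ ∈ E₂`). -/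
def wreathProd {V W : Type*} (G₁ : SimpleGraph V) (G₂ : SimpleGraph W) :
    SimpleGraph (V × W) where
  Adj x y := G₁.Adj x.1 y.1 ∨ (x.1 = y.1 ∧ G₂.Adj x.2 y.2)
  symm := by
    refine ⟨?_⟩
    rintro x y (h | ⟨h, h'⟩)
    · exact Or.inl (G₁.symm.symm _ _ h)
    · exact Or.inr ⟨h.symm, G₂.symm.symm _ _ h'⟩
  loopless := by
    refine ⟨?_⟩
    rintro x (h | ⟨-, h⟩)
    · exact G₁.loopless.irrefl _ h
    · exact G₂.loopless.irrefl _ h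

/-!
The neighbourhood of `(u, v)` in `G₁[G₂]` is the disjoint union of `N(u) × V₂` and `{u} × N(v)`,
so `deg (x, y) = |V₂| deg x + deg y`. Summing this over the two parts, the handshake lemma
`∑_y deg y = 2|E₂|` accounts for the term `2|E₂| deg u`.
-/

namespace SimpleGraph

variable {V W : Type*} (G₁ : SimpleGraph V) (G₂ : SimpleGraph W)

@[simp]
theorem wreathProd_adj {x y : V × W} :
    (wreathProd G₁ G₂).Adj x y ↔ G₁.Adj x.1 y.1 ∨ (x.1 = y.1 ∧ G₂.Adj x.2 y.2) :=
  Iff.rfl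

variable [Fintype V] [Fintype W]

theorem neighborFinset_wreathProd (u : V) (v : W) :
    (wreathProd G₁ G₂).neighborFinset (u, v) =
      (G₁.neighborFinset u ×ˢ univ).disjUnion ({u} ×ˢ G₂.neighborFinset v)
        (by
          rw [Finset.disjoint_left]
          rintro ⟨a, b⟩ h h'
          simp only [mem_product, mem_singleton, mem_neighborFinset] at h h'
          exact G₁.ne_of_adj h.1 h'.1.symm) := by
  ext ⟨a, b⟩
  simp only [mem_neighborFinset, wreathProd_adj, disjUnion_eq_union, mem_union, mem_product,
    mem_univ, mem_singleton, and_true, eq_comm]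

theorem degree_wreathProd (u : V) (v : W) :
    (wreathProd G₁ G₂).degree (u, v) = Fintype.card W * G₁.degree u + G₂.degree v := by
  rw [← card_neighborFinset_eq_degree, neighborFinset_wreathProd, card_disjUnion,
    card_product, card_product, card_univ, card_singleton, one_mul,
    card_neighborFinset_eq_degree, card_neighborFinset_eq_degree, mul_comm]

end SimpleGraph

open SimpleGraph in
theorem neighborDegSum_wreathProd {V W : Type*} [Fintype V] [Fintype W]
    (G₁ : SimpleGraph V) (G₂ : SimpleGraph W) (u : V) (v : W) :
    neighborDegSum (wreathProd G₁ G₂) (u, v) =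
      (Fintype.card W) ^ 2 * neighborDegSum G₁ u + neighborDegSum G₂ v +
        2 * G₂.edgeFinset.card * G₁.degree u +
        Fintype.card W * G₁.degree u * G₂.degree v := by
  have otherFibres : ∑ x ∈ G₁.neighborFinset u, ∑ y : W, (wreathProd G₁ G₂).degree (x, y) =
      Fintype.card W ^ 2 * neighborDegSum G₁ u + 2 * G₂.edgeFinset.card * G₁.degree u := by
    simp only [degree_wreathProd, sum_add_distrib, sum_const, card_univ, smul_eq_mul,
      sum_degrees_eq_twice_card_edges, ← card_neighborFinset_eq_degree G₁ u, neighborDegSum,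
      mul_sum]
    ring_nf
  have sameFibre : ∑ y ∈ G₂.neighborFinset v, (wreathProd G₁ G₂).degree (u, y) =
      Fintype.card W * G₁.degree u * G₂.degree v + neighborDegSum G₂ v := by
    rw [neighborDegSum, ← card_neighborFinset_eq_degree G₂ v]
    simp only [degree_wreathProd, sum_add_distrib, sum_const, smul_eq_mul, mul_comm]
  rw [neighborDegSum, neighborFinset_wreathProd, sum_disjUnion, sum_product, sum_product,
    sum_singleton, otherFibres, sameFibre]
  ring
end
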